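/- arXiv:2001.02516 — 4 statements merged into one kernel-verified Lean document; each statement's English description precedes it below -/
import Mathlib

section
/- Let (ξ_k) be i.i.d. standard Gaussian random variables and X_n = (ξ_1, …, ξ_n, 0, 0, …) viewed as random elements of c₀ (real sequences converging to 0, with sup norm). Then the sequence (n^{-1/2} X_n)_n is not exponentially tight at speed g_n = n: for every compact set K ⊆ c₀, liminf_{n→∞} (1/n) log P(n^{-1/2} X_n ∉ K) = 0. -/
open MeasureTheory ProbabilityTheory Filter
open scoped ENNReal NNReal Topology ZeroAtInfty

/-!
A compact `K ⊆ c₀` lies in a box `{x | ∀ k, |x k| ≤ a k}` with `a k → 0`. The last nonzero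
coordinate of `n^{-1/2} X_n` is `ξ_{n-1} / √n`, so `n^{-1/2} X_n ∉ K` as soon as
`ξ_{n-1} > a_{n-1} √n`, an event of probability at least `c · exp (-(a_{n-1} √n + 1)² / 2)`
(bound the Gaussian density from below on `(t, t + 1]`). Hence
`(1/n) log P(n^{-1/2} X_n ∉ K) ≥ -(a_{n-1} + n^{-1/2})² / 2 + O(1/n) → 0`, and it is `≤ 0`.
-/

namespace ZeroAtInftyContinuousMap

variable {α E : Type*} [TopologicalSpace α] [SeminormedAddCommGroup E]

lemma norm_apply_le (f : C₀(α, E)) (a : α) : ‖f a‖ ≤ ‖f‖ := by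
  rw [← norm_toBCF_eq_norm]; exact f.toBCF.norm_coe_le_norm a

lemma eventually_forall_norm_apply_lt_of_isCompact {K : Set C₀(α, E)} (hK : IsCompact K)
    {δ : ℝ} (hδ : 0 < δ) : ∀ᶠ a in cocompact α, ∀ f ∈ K, ‖f a‖ < δ := by
  obtain ⟨t, ht, hKt⟩ := Metric.totallyBounded_iff.mp hK.totallyBounded (δ / 2) (half_pos hδ)
  have hsmall : ∀ᶠ a in cocompact α, ∀ g ∈ t, ‖g a‖ < δ / 2 :=
    (ht.eventually_all).2 fun g _ ↦ (zero_at_infty g).norm.eventually_lt_const (by simpa)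
  filter_upwards [hsmall] with a ha f hf
  obtain ⟨g, hg, hfg⟩ := Set.mem_iUnion₂.mp (hKt hf)
  have hdist : dist (f a) (g a) ≤ dist f g := by
    rw [← dist_toBCF_eq_dist]
    exact BoundedContinuousFunction.dist_coe_le_dist (f := f.toBCF) (g := g.toBCF) a
  calc ‖f a‖ ≤ dist (f a) (g a) + ‖g a‖ := by rw [dist_eq_norm]; exact norm_le_norm_sub_add _ _
    _ < δ / 2 + δ / 2 :=
      add_lt_add_of_le_of_lt (hdist.trans (Metric.mem_ball.mp hfg).le) (ha g hg)
    _ = δ := add_halves δ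

lemma exists_tendsto_zero_forall_norm_apply_le_of_isCompact {K : Set C₀(α, E)}
    (hK : IsCompact K) : ∃ b : α → ℝ, (∀ a, 0 ≤ b a) ∧ Tendsto b (cocompact α) (𝓝 0) ∧
      ∀ f ∈ K, ∀ a, ‖f a‖ ≤ b a := by
  obtain ⟨R, hR⟩ := hK.isBounded.exists_norm_le
  have hbdd : ∀ a, BddAbove (Set.range fun f : K ↦ ‖(f : C₀(α, E)) a‖) := fun a ↦
    ⟨R, by rintro _ ⟨f, rfl⟩; exact (norm_apply_le f.1 a).trans (hR f.1 f.2)⟩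
  refine ⟨fun a ↦ ⨆ f : K, ‖(f : C₀(α, E)) a‖, fun a ↦ Real.iSup_nonneg fun _ ↦ norm_nonneg _,
    ?_, fun f hf a ↦ le_ciSup (hbdd a) (⟨f, hf⟩ : K)⟩
  refine Metric.tendsto_nhds.2 fun ε hε ↦ ?_
  filter_upwards [eventually_forall_norm_apply_lt_of_isCompact hK (half_pos hε)] with a ha
  rw [Real.dist_0_eq_abs, abs_of_nonneg (Real.iSup_nonneg fun _ ↦ norm_nonneg _)]
  exact (Real.iSup_le (fun f : K ↦ (ha f.1 f.2).le) (half_pos hε).le).trans_lt (half_lt_self hε)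

end ZeroAtInftyContinuousMap

lemma ofReal_exp_le_gaussianReal_Ioi {t : ℝ} (ht : 0 ≤ t) :
    ENNReal.ofReal ((√(2 * Real.pi))⁻¹ * Real.exp (-(t + 1) ^ 2 / 2)) ≤
      gaussianReal 0 1 (Set.Ioi t) := by
  set c := (√(2 * Real.pi))⁻¹ * Real.exp (-(t + 1) ^ 2 / 2)
  have hpdf : IntegrableOn (gaussianPDFReal 0 1) (Set.Ioi t) :=
    (integrable_gaussianPDFReal 0 1).integrableOn
  have hc : ∀ x ∈ Set.Ioc t (t + 1), c ≤ gaussianPDFReal 0 1 x := by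
    rintro x ⟨htx, hxt⟩
    simp only [c, gaussianPDFReal, NNReal.coe_one, mul_one, sub_zero]
    have hx : 0 ≤ x := ht.trans htx.le
    gcongr
  rw [gaussianReal_apply_eq_integral 0 one_ne_zero]
  refine ENNReal.ofReal_le_ofReal ?_
  calc c = ∫ _ in Set.Ioc t (t + 1), c := by simp
    _ ≤ ∫ x in Set.Ioc t (t + 1), gaussianPDFReal 0 1 x :=
      setIntegral_mono_on (integrableOn_const measure_Ioc_lt_top.ne)
        (hpdf.mono_set Set.Ioc_subset_Ioi_self) measurableSet_Ioc hc
    _ ≤ ∫ x in Set.Ioi t, gaussianPDFReal 0 1 x :=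
      setIntegral_mono_set hpdf (ae_of_all _ (gaussianPDFReal_nonneg 0 1))
        Set.Ioc_subset_Ioi_self.eventuallyLE

lemma tendsto_inv_mul_sub_sq_mul_sqrt_add_one_div_two {b : ℕ → ℝ}
    (hb : Tendsto b atTop (𝓝 0)) (L : ℝ) :
    Tendsto (fun n : ℕ ↦ (n : ℝ)⁻¹ * (L - (b n * √n + 1) ^ 2 / 2)) atTop (𝓝 0) := by
  have hsqrt : Tendsto (fun n : ℕ ↦ (√n)⁻¹) atTop (𝓝 0) :=
    (Real.tendsto_sqrt_atTop.comp tendsto_natCast_atTop_atTop).inv_tendsto_atTop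
  have hlim : Tendsto (fun n : ℕ ↦ L * (n : ℝ)⁻¹ - (b n + (√n)⁻¹) ^ 2 / 2) atTop (𝓝 0) := by
    simpa using (tendsto_inv_atTop_nhds_zero_nat.const_mul L).sub
      (((hb.add hsqrt).pow 2).div_const 2)
  refine hlim.congr' ?_
  filter_upwards [eventually_gt_atTop 0] with n hn
  field_simp
  rw [Real.sq_sqrt (Nat.cast_nonneg _)]
  ring

lemma tendsto_inv_mul_log_of_ofReal_mul_exp_le {p : ℕ → ℝ≥0∞} {b : ℕ → ℝ} {c : ℝ}
    (hc : 0 < c) (hb : Tendsto b atTop (𝓝 0)) (hp : ∀ n, p n ≤ 1)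
    (hlow : ∀ᶠ n in atTop, ENNReal.ofReal (c * Real.exp (-(b n * √n + 1) ^ 2 / 2)) ≤ p n) :
    Tendsto (fun n : ℕ ↦ (((n : ℝ)⁻¹ : ℝ) : EReal) * ENNReal.log (p n)) atTop (𝓝 0) := by
  have hinv : ∀ n : ℕ, (0 : EReal) ≤ (((n : ℝ)⁻¹ : ℝ) : EReal) := fun n ↦
    EReal.coe_nonneg.2 (inv_nonneg.2 n.cast_nonneg)
  refine tendsto_of_tendsto_of_tendsto_of_le_of_le'
    ((continuous_coe_real_ereal.tendsto 0).comp
      (tendsto_inv_mul_sub_sq_mul_sqrt_add_one_div_two hb (Real.log c)))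
    tendsto_const_nhds ?_ (Eventually.of_forall fun n ↦ ?_)
  · filter_upwards [hlow] with n hn
    have hlog : ((Real.log c - (b n * √n + 1) ^ 2 / 2 : ℝ) : EReal) ≤ ENNReal.log (p n) := by
      have := ENNReal.log_monotone hn
      rwa [ENNReal.log_ofReal_of_pos (by positivity), Real.log_mul hc.ne' (Real.exp_ne_zero _),
        Real.log_exp, neg_div, ← sub_eq_add_neg] at this
    simpa only [Function.comp_apply, EReal.coe_mul] using
      mul_le_mul_of_nonneg_left hlog (hinv n)
  · simpa using mul_le_mul_of_nonneg_left (ENNReal.log_le_zero_iff.2 (hp n)) (hinv n)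

theorem stmt_14_general {Ω : Type*} [MeasurableSpace Ω] (P : Measure Ω) [IsProbabilityMeasure P]
    (ξ : ℕ → Ω → ℝ) (hmeas : ∀ k, Measurable (ξ k))
    (hgauss : ∀ k, P.map (ξ k) = gaussianReal 0 1)
    (X : ℕ → Ω → ZeroAtInftyContinuousMap ℕ ℝ)
    (hX : ∀ n ω k, X n ω k = if k < n then ξ k ω else 0) :
    ∀ K : Set (ZeroAtInftyContinuousMap ℕ ℝ), IsCompact K →
      liminf (fun n : ℕ => (((n : ℝ)⁻¹ : ℝ) : EReal) *
          ENNReal.log (P {ω | (Real.sqrt n)⁻¹ • X n ω ∉ K})) atTop = 0 := by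
  intro K hK
  obtain ⟨a, ha_nonneg, ha, haK⟩ :=
    ZeroAtInftyContinuousMap.exists_tendsto_zero_forall_norm_apply_le_of_isCompact hK
  rw [cocompact_eq_cofinite, Nat.cofinite_eq_atTop] at ha
  refine (tendsto_inv_mul_log_of_ofReal_mul_exp_le (b := fun n ↦ a (n - 1))
    (c := (√(2 * Real.pi))⁻¹) (by positivity)
    (ha.comp (tendsto_sub_atTop_nat 1)) (fun _ ↦ prob_le_one) ?_).liminf_eq
  filter_upwards [eventually_gt_atTop 0] with n hn
  have hsqrt : 0 < √(n : ℝ) := Real.sqrt_pos.2 (Nat.cast_pos.2 hn)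
  have hescape : ξ (n - 1) ⁻¹' Set.Ioi (a (n - 1) * √n) ⊆
      {ω | (√n)⁻¹ • X n ω ∉ K} := by
    intro ω hω hmem
    have hle := haK _ hmem (n - 1)
    rw [ZeroAtInftyContinuousMap.smul_apply, hX, if_pos (Nat.sub_lt hn one_pos), norm_smul,
      norm_inv, Real.norm_of_nonneg hsqrt.le, inv_mul_le_iff₀ hsqrt, Real.norm_eq_abs] at hle
    have hlt : a (n - 1) * √n < ξ (n - 1) ω := hω
    linarith [le_abs_self (ξ (n - 1) ω)]
  calc _ ≤ gaussianReal 0 1 (Set.Ioi (a (n - 1) * √n)) :=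
        ofReal_exp_le_gaussianReal_Ioi (mul_nonneg (ha_nonneg _) hsqrt.le)
    _ = P (ξ (n - 1) ⁻¹' Set.Ioi (a (n - 1) * √n)) := by
        rw [← hgauss, Measure.map_apply (hmeas _) measurableSet_Ioi]
    _ ≤ _ := measure_mono hescape

/-- With `ξ_k` i.i.d. standard Gaussians and `X_n = (ξ_1,…,ξ_n,0,0,…) ∈ c₀`, the
sequence `(n^{-1/2} X_n)` is not exponentially tight at speed `g_n = n`: for every
compact `K ⊆ c₀`, `liminf (1/n) log P(n^{-1/2} X_n ∉ K) = 0`. -/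
theorem stmt_14 {Ω : Type*} [MeasurableSpace Ω] (P : Measure Ω) [IsProbabilityMeasure P]
    (ξ : ℕ → Ω → ℝ) (hmeas : ∀ k, Measurable (ξ k))
    (hindep : iIndepFun ξ P)
    (hgauss : ∀ k, P.map (ξ k) = gaussianReal 0 1)
    (X : ℕ → Ω → ZeroAtInftyContinuousMap ℕ ℝ)
    (hX : ∀ n ω k, X n ω k = if k < n then ξ k ω else 0) :
    ∀ K : Set (ZeroAtInftyContinuousMap ℕ ℝ), IsCompact K →
      liminf (fun n : ℕ => (((n : ℝ)⁻¹ : ℝ) : EReal) *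
          ENNReal.log (P {ω | (Real.sqrt n)⁻¹ • X n ω ∉ K})) atTop = 0 :=
  stmt_14_general P ξ hmeas hgauss X hX
end

section
/- Let (ξ_k) be i.i.d. standard Gaussians and X_n = (ξ_1,…,ξ_n,0,0,…) ∈ c₀. For every θ = (θ_k) ∈ ℓ¹ and speed g_n = n, the limit lim_{n→∞} (1/n) log E[exp(n^{1/2} ⟨θ, X_n⟩)] exists and equals (1/2)∑_{k=1}^∞ θ_k² < ∞. (Thus finiteness of the limiting log-Laplace transform on all of E' = ℓ¹ does not imply exponential tightness in infinite dimensions.) -/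
open MeasureTheory ProbabilityTheory Filter Real
open scoped ENNReal NNReal Topology

/-!
By independence the moment generating function of `∑_{k<n} θ_k ξ_k` factorizes into Gaussian
ones, so `E[exp(√n ⟨θ, X_n⟩)] = exp(n ∑_{k<n} θ_k² / 2)` exactly. After taking `(1/n) log`, the
quantity is the partial sum `(1/2) ∑_{k<n} θ_k²`, which converges because `ℓ¹ ⊆ ℓ²`.
-/

lemma summable_sq_of_summable_abs {θ : ℕ → ℝ} (hθ : Summable fun k => |θ k|) :
    Summable fun k => θ k ^ 2 := by
  refine Summable.of_nonneg_of_le (fun k => sq_nonneg _) (fun k => ?_)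
    (hθ.mul_left (∑' k, |θ k|))
  calc θ k ^ 2 = |θ k| * |θ k| := by rw [← sq_abs, sq]
    _ ≤ (∑' k, |θ k|) * |θ k| :=
      mul_le_mul_of_nonneg_right (hθ.le_tsum k fun j _ => abs_nonneg _) (abs_nonneg _)

lemma mgf_sum_mul_of_iIndepFun_gaussian {Ω ι : Type*} [MeasurableSpace Ω] {P : Measure Ω}
    {ξ : ι → Ω → ℝ} (hindep : iIndepFun ξ P) (hgauss : ∀ k, P.map (ξ k) = gaussianReal 0 1)
    (θ : ι → ℝ) (s : Finset ι) (t : ℝ) :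
    mgf (fun ω => ∑ k ∈ s, θ k * ξ k ω) P t = exp (t ^ 2 * ∑ k ∈ s, θ k ^ 2 / 2) := by
  have hξ : ∀ k, AEMeasurable (ξ k) P := fun k =>
    aemeasurable_of_map_neZero (by rw [hgauss k]; infer_instance)
  have hindep' : iIndepFun (fun k ω => θ k * ξ k ω) P :=
    hindep.comp (fun k x => θ k * x) fun k => measurable_const_mul _
  have hsum : (fun ω => ∑ k ∈ s, θ k * ξ k ω) = ∑ k ∈ s, fun ω => θ k * ξ k ω := by
    ext ω
    simp only [Finset.sum_apply]
  rw [hsum, hindep'.mgf_sum₀ (fun k => (hξ k).const_mul _), Finset.mul_sum, exp_sum]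
  refine Finset.prod_congr rfl fun k _ => ?_
  rw [mgf_const_mul, mgf_gaussianReal (hgauss k), NNReal.coe_one]
  ring_nf

theorem stmt_15_general {Ω : Type*} [MeasurableSpace Ω] (P : Measure Ω)
    (ξ : ℕ → Ω → ℝ)
    (hindep : iIndepFun ξ P)
    (hgauss : ∀ k, P.map (ξ k) = gaussianReal 0 1) :
    ∀ θ : ℕ → ℝ, Summable (fun k => |θ k|) →
      Summable (fun k => (θ k) ^ 2) ∧
      Tendsto (fun n : ℕ => (n : ℝ)⁻¹ *
          Real.log (∫ ω, Real.exp (Real.sqrt n * ∑ k ∈ Finset.range n, θ k * ξ k ω) ∂P))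
        atTop (𝓝 ((1/2) * ∑' k, (θ k) ^ 2)) := by
  intro θ hθ
  have hsq := summable_sq_of_summable_abs hθ
  refine ⟨hsq, Tendsto.congr' ?_ (hsq.hasSum.tendsto_sum_nat.const_mul (1/2 : ℝ))⟩
  filter_upwards [eventually_ge_atTop 1] with n hn
  have hn0 : (n : ℝ) ≠ 0 := by positivity
  change _ = (n : ℝ)⁻¹ * log (mgf _ P (√n))
  rw [mgf_sum_mul_of_iIndepFun_gaussian hindep hgauss, log_exp, sq_sqrt n.cast_nonneg,
    ← Finset.sum_div]
  field_simp

/-- With `ξ_k` i.i.d. standard Gaussians and `X_n = (ξ_1,…,ξ_n,0,0,…) ∈ c₀`, for every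
`θ ∈ ℓ¹` the normalized log-Laplace transform at speed `g_n = n` converges:
`(1/n) log E[exp(n^{1/2}⟨θ,X_n⟩)] → (1/2)∑_k θ_k² < ∞`. -/
theorem stmt_15 {Ω : Type*} [MeasurableSpace Ω] (P : Measure Ω) [IsProbabilityMeasure P]
    (ξ : ℕ → Ω → ℝ) (hmeas : ∀ k, Measurable (ξ k))
    (hindep : iIndepFun ξ P)
    (hgauss : ∀ k, P.map (ξ k) = gaussianReal 0 1) :
    ∀ θ : ℕ → ℝ, Summable (fun k => |θ k|) →
      Summable (fun k => (θ k) ^ 2) ∧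
      Tendsto (fun n : ℕ => (n : ℝ)⁻¹ *
          Real.log (∫ ω, Real.exp (Real.sqrt n * ∑ k ∈ Finset.range n, θ k * ξ k ω) ∂P))
        atTop (𝓝 ((1/2) * ∑' k, (θ k) ^ 2)) :=
  stmt_15_general P ξ hindep hgauss
end

section
/- Let (ξ_k) be i.i.d. standard Gaussians, (a_k) positive with a_k → 0, X_n = (a_1ξ_1,…,a_nξ_n,0,0,…) ∈ c₀, and g a speed function with g_n ≥ M log n for all n ≥ 2 and some M > 0. Then (g_n^{-1/2} X_n)_n is exponentially tight at speed g: for every R > 0 there is a compact K_R ⊆ c₀ and a constant C such that P(g_n^{-1/2} X_n ∉ K_R) ≤ C·exp(−R g_n) for all n. -/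
/-!
Put `b_k = √(2(R + 1/M)) |a_k|`. Since `b_k → 0`, the box `K = {x : |x_k| ≤ b_k}` is compact in
`c₀`: on it the sup-norm topology is the product topology, because outside finitely many
coordinates every point of `K` is uniformly small. The event `g_n^{-1/2} X_n ∉ K` forces
`|ξ_k| ≥ √(2(R + 1/M) g_n)` for some `k < n`, so the union bound and the Gaussian tail
`P(|ξ| ≥ t) ≤ 2 exp(-t²/2)` bound its probability by `2 n exp(-g_n/M) exp(-R g_n)`, and
`n ≤ exp(g_n/M)` because `g_n ≥ M log n`.
-/

open MeasureTheory ProbabilityTheory Filter Real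
open scoped ENNReal NNReal Topology ZeroAtInfty

namespace ProbabilityTheory

lemma hasSubgaussianMGF_id_gaussianReal (v : ℝ≥0) : HasSubgaussianMGF id v (gaussianReal 0 v) where
  integrable_exp_mul := integrable_exp_mul_gaussianReal
  mgf_le t := by simp [mgf_id_gaussianReal]

lemma hasSubgaussianMGF_of_map_eq_gaussianReal {Ω : Type*} [MeasurableSpace Ω] {μ : Measure Ω}
    {X : Ω → ℝ} {v : ℝ≥0} (hX : μ.map X = gaussianReal 0 v) : HasSubgaussianMGF X v μ := by
  have hXm : AEMeasurable X μ := aemeasurable_of_map_neZero (by rw [hX]; infer_instance)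
  rw [← HasSubgaussianMGF.id_map_iff hXm, hX]
  exact hasSubgaussianMGF_id_gaussianReal v

lemma HasSubgaussianMGF.measureReal_abs_ge_le {Ω : Type*} [MeasurableSpace Ω] {μ : Measure Ω}
    {X : Ω → ℝ} {c : ℝ≥0} (h : HasSubgaussianMGF X c μ) {ε : ℝ} (hε : 0 ≤ ε) :
    μ.real {ω | ε ≤ |X ω|} ≤ 2 * exp (-ε ^ 2 / (2 * c)) := by
  have : IsFiniteMeasure μ := by
    have h1 : Integrable (fun _ ↦ (1 : ℝ)) μ := by simpa using h.integrable_exp_mul 0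
    exact (integrable_const_iff.1 h1).resolve_left one_ne_zero
  calc μ.real {ω | ε ≤ |X ω|} ≤ μ.real ({ω | ε ≤ X ω} ∪ {ω | ε ≤ (-X) ω}) :=
        measureReal_mono fun ω (hω : ε ≤ |X ω|) ↦ le_abs.1 hω
    _ ≤ μ.real {ω | ε ≤ X ω} + μ.real {ω | ε ≤ (-X) ω} := measureReal_union_le _ _
    _ ≤ 2 * exp (-ε ^ 2 / (2 * c)) := by
        linarith [h.measure_ge_le hε, h.neg.measure_ge_le hε]

lemma measureReal_biUnion_abs_ge_le {Ω ι : Type*} [MeasurableSpace Ω] {μ : Measure Ω}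
    {X : ι → Ω → ℝ} {c : ℝ≥0} (h : ∀ i, HasSubgaussianMGF (X i) c μ) (s : Finset ι) {ε : ℝ}
    (hε : 0 ≤ ε) :
    μ.real (⋃ i ∈ s, {ω | ε ≤ |X i ω|}) ≤ s.card * (2 * exp (-ε ^ 2 / (2 * c))) := by
  calc μ.real (⋃ i ∈ s, {ω | ε ≤ |X i ω|}) ≤ ∑ i ∈ s, μ.real {ω | ε ≤ |X i ω|} :=
        measureReal_biUnion_finset_le _ _
    _ ≤ ∑ _i ∈ s, 2 * exp (-ε ^ 2 / (2 * c)) :=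
        Finset.sum_le_sum fun i _ ↦ (h i).measureReal_abs_ge_le hε
    _ = s.card * (2 * exp (-ε ^ 2 / (2 * c))) := by rw [Finset.sum_const, nsmul_eq_mul]

end ProbabilityTheory

namespace ZeroAtInftyContinuousMap

variable {α : Type*} [TopologicalSpace α]

lemma dist_le_of_forall {β : Type*} [MetricSpace β] [Zero β] {x y : C₀(α, β)} {r : ℝ} (hr : 0 ≤ r)
    (h : ∀ k, dist (x k) (y k) ≤ r) : dist x y ≤ r := by
  rw [← dist_toBCF_eq_dist]
  exact (BoundedContinuousFunction.dist_le hr).2 h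

variable [DiscreteTopology α]

def ofAbsLe {b : α → ℝ} (hb : Tendsto b (cocompact α) (𝓝 0))
    (x : (k : α) → Set.Icc (-b k) (b k)) : C₀(α, ℝ) where
  toFun k := x k
  continuous_toFun := continuous_of_discreteTopology
  zero_at_infty' := squeeze_zero_norm (fun k ↦ abs_le.2 (x k).2) hb

lemma continuous_ofAbsLe {b : α → ℝ} (hb : Tendsto b (cocompact α) (𝓝 0)) :
    Continuous (ofAbsLe hb) := by
  refine continuous_iff_continuousAt.2 fun x ↦ Metric.tendsto_nhds.2 fun ε hε ↦ ?_
  have hfin : {k | ε / 3 ≤ b k}.Finite := by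
    rw [cocompact_eq_cofinite] at hb
    simpa using (hb.eventually_lt_const (by positivity : (0 : ℝ) < ε / 3))
  have hnear : ∀ᶠ y in 𝓝 x, ∀ k ∈ {k | ε / 3 ≤ b k}, dist (y k : ℝ) (x k) < ε / 2 :=
    (eventually_all_finite hfin).2 fun k _ ↦
      (continuous_subtype_val.comp (continuous_apply k)).continuousAt.eventually
        (Metric.ball_mem_nhds _ (by positivity))
  filter_upwards [hnear] with y hy
  refine (dist_le_of_forall (r := 2 * ε / 3) (by positivity) fun k ↦ ?_).trans_lt (by linarith)
  by_cases hk : ε / 3 ≤ b k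
  · exact (hy k hk).le.trans (by linarith)
  · have hy := abs_le.2 (y k).2
    have hx := abs_le.2 (x k).2
    calc dist (y k : ℝ) (x k) = |(y k : ℝ) - x k| := Real.dist_eq _ _
      _ ≤ |(y k : ℝ)| + |(x k : ℝ)| := abs_sub _ _
      _ ≤ 2 * ε / 3 := by linarith

theorem isCompact_setOf_forall_abs_le {b : α → ℝ} (hb : Tendsto b (cocompact α) (𝓝 0)) :
    IsCompact {x : C₀(α, ℝ) | ∀ k, |x k| ≤ b k} := by
  convert isCompact_range (continuous_ofAbsLe hb)
  ext x
  refine ⟨fun hx ↦ ⟨fun k ↦ ⟨x k, abs_le.1 (hx k)⟩, rfl⟩, ?_⟩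
  rintro ⟨y, rfl⟩ k
  exact abs_le.2 (y k).2

end ZeroAtInftyContinuousMap

lemma natCast_mul_exp_neg_div_le_one {M x : ℝ} (hM : 0 < M) {n : ℕ} (hx : 0 ≤ x)
    (h : 2 ≤ n → M * log n ≤ x) : n * exp (-(x / M)) ≤ 1 := by
  rw [exp_neg, ← div_eq_mul_inv, div_le_one (exp_pos _)]
  rcases lt_or_ge n 2 with hn | hn
  · interval_cases n
    · simpa using (exp_pos (x / M)).le
    · simpa using one_le_exp (div_nonneg hx hM.le)
  · rw [← exp_log (by positivity : (0 : ℝ) < n)]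
    exact exp_le_exp.2 ((le_div_iff₀' hM).2 (h hn))

lemma abs_inv_smul_apply_le {n : ℕ} {a y : ℕ → ℝ} {x : C₀(ℕ, ℝ)}
    (hx : ∀ k, x k = if k < n then a k * y k else 0) {s c : ℝ} (hs : 0 < s) (hc : 0 ≤ c)
    (hy : ∀ k < n, |y k| ≤ c * s) (k : ℕ) : |(s⁻¹ • x) k| ≤ c * |a k| := by
  rw [ZeroAtInftyContinuousMap.smul_apply, hx, smul_eq_mul]
  split_ifs with hk
  · rw [abs_mul, abs_mul, abs_of_pos (inv_pos.2 hs), inv_mul_le_iff₀ hs]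
    nlinarith [abs_nonneg (a k), hy k hk]
  · simp only [mul_zero, abs_zero]
    positivity

theorem stmt_17_general {Ω : Type*} [MeasurableSpace Ω] (P : Measure Ω) [IsProbabilityMeasure P]
    (ξ : ℕ → Ω → ℝ)
    (hgauss : ∀ k, P.map (ξ k) = gaussianReal 0 1)
    (a : ℕ → ℝ) (ha0 : Tendsto a atTop (𝓝 0))
    (X : ℕ → Ω → ZeroAtInftyContinuousMap ℕ ℝ)
    (hX : ∀ n ω k, X n ω k = if k < n then a k * ξ k ω else 0)
    (g : ℕ → ℝ) (hgpos : ∀ n, 0 < g n)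
    (M : ℝ) (hM : 0 < M) (hglog : ∀ n : ℕ, 2 ≤ n → M * Real.log n ≤ g n) :
    ∀ R : ℝ, 0 < R →
      ∃ K : Set (ZeroAtInftyContinuousMap ℕ ℝ), ∃ C : ℝ, IsCompact K ∧ 0 < C ∧
        ∀ n : ℕ, P {ω | (Real.sqrt (g n))⁻¹ • X n ω ∉ K}
          ≤ ENNReal.ofReal (C * Real.exp (-R * g n)) := by
  intro R hR
  set c := √(2 * (R + 1 / M))
  have hb : Tendsto (fun k ↦ c * |a k|) (cocompact ℕ) (𝓝 0) := by
    simpa [cocompact_eq_atTop] using ha0.abs.const_mul c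
  refine ⟨_, 2, ZeroAtInftyContinuousMap.isCompact_setOf_forall_abs_le hb, two_pos, fun n ↦ ?_⟩
  set s := √(g n)
  have hsub : {ω | s⁻¹ • X n ω ∉ {x : C₀(ℕ, ℝ) | ∀ k, |x k| ≤ c * |a k|}} ⊆
      ⋃ k ∈ Finset.range n, {ω | c * s ≤ |ξ k ω|} := fun ω hω ↦ by
    by_contra hω'
    exact hω <| abs_inv_smul_apply_le (hX n ω) (sqrt_pos.2 (hgpos n)) (sqrt_nonneg _)
      fun k hk ↦ (not_le.1 fun h ↦ hω' (Set.mem_biUnion (Finset.mem_range.2 hk) h)).le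
  have hξ (k : ℕ) : HasSubgaussianMGF (ξ k) 1 P :=
    hasSubgaussianMGF_of_map_eq_gaussianReal (hgauss k)
  have hexponent : -(c * s) ^ 2 / (2 * ((1 : ℝ≥0) : ℝ)) = -(g n / M) + -R * g n := by
    rw [NNReal.coe_one, mul_one, mul_pow, sq_sqrt (by positivity), sq_sqrt (hgpos n).le]
    field_simp
    ring
  calc P _ ≤ P (⋃ k ∈ Finset.range n, {ω | c * s ≤ |ξ k ω|}) := measure_mono hsub
    _ = ENNReal.ofReal (P.real (⋃ k ∈ Finset.range n, {ω | c * s ≤ |ξ k ω|})) :=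
        (ofReal_measureReal (measure_ne_top _ _)).symm
    _ ≤ ENNReal.ofReal (2 * (n * exp (-(g n / M))) * exp (-R * g n)) := by
        refine ENNReal.ofReal_le_ofReal <| (measureReal_biUnion_abs_ge_le hξ (Finset.range n)
          (ε := c * s) (by positivity)).trans_eq ?_
        rw [hexponent, exp_add, Finset.card_range]
        ring
    _ ≤ ENNReal.ofReal (2 * exp (-R * g n)) := by
        grw [natCast_mul_exp_neg_div_le_one hM (hgpos n).le (hglog n), mul_one]

/-- With `ξ_k` i.i.d. standard Gaussians, `a_k > 0`, `a_k → 0`,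
`X_n = (a_1ξ_1,…,a_nξ_n,0,0,…) ∈ c₀` and a speed function `g` with `g_n ≥ M log n`,
the sequence `(g_n^{-1/2} X_n)` is exponentially tight at speed `g` (up to a
multiplicative constant). -/
theorem stmt_17 {Ω : Type*} [MeasurableSpace Ω] (P : Measure Ω) [IsProbabilityMeasure P]
    (ξ : ℕ → Ω → ℝ) (hmeas : ∀ k, Measurable (ξ k))
    (hindep : iIndepFun ξ P)
    (hgauss : ∀ k, P.map (ξ k) = gaussianReal 0 1)
    (a : ℕ → ℝ) (ha : ∀ k, 0 < a k) (ha0 : Tendsto a atTop (𝓝 0))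
    (X : ℕ → Ω → ZeroAtInftyContinuousMap ℕ ℝ)
    (hX : ∀ n ω k, X n ω k = if k < n then a k * ξ k ω else 0)
    (g : ℕ → ℝ) (hgpos : ∀ n, 0 < g n) (hg : Tendsto g atTop atTop)
    (M : ℝ) (hM : 0 < M) (hglog : ∀ n : ℕ, 2 ≤ n → M * Real.log n ≤ g n) :
    ∀ R : ℝ, 0 < R →
      ∃ K : Set (ZeroAtInftyContinuousMap ℕ ℝ), ∃ C : ℝ, IsCompact K ∧ 0 < C ∧
        ∀ n : ℕ, P {ω | (Real.sqrt (g n))⁻¹ • X n ω ∉ K}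
          ≤ ENNReal.ofReal (C * Real.exp (-R * g n)) :=
  stmt_17_general P ξ hgauss a ha0 X hX g hgpos M hM hglog
end

section
/- Let E be a separable Banach space, (μ_n) an exponentially tight sequence of probability measures at speed g such that Λ(θ) := lim_n (1/g_n) log ∫_E e^{g_n⟨θ,x⟩} dμ_n(x) exists for all θ ∈ E' and each μ_n is the law of g_n^{-1/2} times a centered Gaussian variable whose laws converge weakly. If Λ ≡ 0 (i.e. Var(⟨θ,X_n⟩) → 0 for all θ), then for every δ > 0, limsup_n (1/g_n) log μ_n({x : ‖x‖ ≥ δ}) = −∞. -/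
open MeasureTheory ProbabilityTheory Filter
open scoped ENNReal NNReal Topology

/-!
By Chernoff's bound, `μ_n {θ ≥ a} ≤ exp (g_n (Λ_n(θ) - a))` with
`Λ_n(θ) = g_n⁻¹ log ∫ exp (g_n θ) dμ_n`; since `Λ_n(sθ) → 0` for every slope `s`, letting
`s → ∞` shows that every open half-space `{θ > r}` with `r > 0` has `μ_n`-mass decaying faster
than `exp (-g_n R)` for every `R`. Exponential tightness puts all but `exp (-g_n R)` of the mass
in a compact `K`, and by Hahn–Banach `K ∩ {‖x‖ ≥ δ}` is covered by finitely many half-spaces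
`{θ > δ/2}`, so `μ_n {‖x‖ ≥ δ}` decays faster than every exponential.
-/

/-- The constant `C` is harmless because `g_n → ∞`, and makes the notion stable under finite
sums. -/
def SuperexpDecay (g : ℕ → ℝ) (m : ℕ → ℝ≥0∞) : Prop :=
  ∀ R > 0, ∃ C : ℝ≥0, ∀ᶠ n in atTop, m n ≤ C * ENNReal.ofReal (Real.exp (-g n * R))

namespace SuperexpDecay

variable {g : ℕ → ℝ} {m : ℕ → ℝ≥0∞}

theorem finset_sum {ι : Type*} {t : Finset ι} {m : ι → ℕ → ℝ≥0∞}
    (h : ∀ i ∈ t, SuperexpDecay g (m i)) : SuperexpDecay g (fun n => ∑ i ∈ t, m i n) := by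
  intro R hR
  choose! C hC using fun i hi => h i hi R hR
  refine ⟨∑ i ∈ t, C i, ?_⟩
  filter_upwards [(eventually_all_finset t).2 hC] with n hn
  calc ∑ i ∈ t, m i n ≤ ∑ i ∈ t, C i * ENNReal.ofReal (Real.exp (-g n * R)) :=
        Finset.sum_le_sum hn
    _ = _ := by rw [ENNReal.ofNNReal_finsetSum, Finset.sum_mul]

theorem eventually_le_exp_mul (hg : Tendsto g atTop atTop) (h : SuperexpDecay g m) (c : ℝ) :
    ∀ᶠ n in atTop, m n ≤ ENNReal.ofReal (Real.exp (g n * c)) := by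
  obtain ⟨C, hC⟩ := h (|c| + 1) (by positivity)
  filter_upwards [hC, hg.eventually_ge_atTop 0,
    (Real.tendsto_exp_atTop.comp hg).eventually_ge_atTop (C : ℝ)] with n hn hg0 hCexp
  calc m n ≤ C * ENNReal.ofReal (Real.exp (-g n * (|c| + 1))) := hn
    _ ≤ ENNReal.ofReal (Real.exp (g n)) * ENNReal.ofReal (Real.exp (-g n * (|c| + 1))) := by
        rw [← ENNReal.ofReal_coe_nnreal]
        gcongr
        exact hCexp
    _ ≤ ENNReal.ofReal (Real.exp (g n * c)) := by
        rw [← ENNReal.ofReal_mul (Real.exp_pos _).le, ← Real.exp_add]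
        gcongr
        nlinarith [neg_abs_le c]

theorem limsup_log_eq_bot (hgpos : ∀ n, 0 < g n) (hg : Tendsto g atTop atTop)
    (h : SuperexpDecay g m) :
    limsup (fun n => (((g n)⁻¹ : ℝ) : EReal) * ENNReal.log (m n)) atTop = ⊥ := by
  refine (EReal.eq_bot_iff_forall_lt _).2 fun c => ?_
  refine lt_of_le_of_lt (limsup_le_of_le (by isBoundedDefault) ?_)
    (EReal.coe_lt_coe_iff.2 (sub_one_lt c))
  filter_upwards [h.eventually_le_exp_mul hg (c - 1)] with n hn
  calc (((g n)⁻¹ : ℝ) : EReal) * ENNReal.log (m n)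
      ≤ (((g n)⁻¹ : ℝ) : EReal) * ((g n * (c - 1) : ℝ) : EReal) := by
        gcongr
        · exact_mod_cast (inv_pos.2 (hgpos n)).le
        · simpa [ENNReal.log_ofReal_of_pos (Real.exp_pos _)] using ENNReal.log_monotone hn
    _ = ((c - 1 : ℝ) : EReal) := by
        rw [← EReal.coe_mul, inv_mul_cancel_left₀ (hgpos n).ne']

end SuperexpDecay

theorem integrable_exp_mul_of_map_eq_gaussianReal {Ω : Type*} [MeasurableSpace Ω]
    {p : Measure Ω} {X : Ω → ℝ} {m : ℝ} {v : ℝ≥0} (hX : p.map X = gaussianReal m v) (t : ℝ) :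
    Integrable (fun ω => Real.exp (t * X ω)) p := by
  have hX_meas : AEMeasurable X p := aemeasurable_of_map_neZero (by rw [hX]; infer_instance)
  have h := integrable_exp_mul_gaussianReal (μ := m) (v := v) t
  rwa [← hX, integrable_map_measure (by fun_prop) hX_meas] at h

theorem measure_ge_le_ofReal_exp_mul_mgf {Ω : Type*} [MeasurableSpace Ω] {μ : Measure Ω}
    [IsFiniteMeasure μ] {X : Ω → ℝ} {t : ℝ} (ε : ℝ) (ht : 0 ≤ t)
    (h_int : Integrable (fun ω => Real.exp (t * X ω)) μ) :
    μ {ω | ε ≤ X ω} ≤ ENNReal.ofReal (Real.exp (-t * ε) * mgf X μ t) := by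
  rw [← ofReal_measureReal]
  exact ENNReal.ofReal_le_ofReal (measure_ge_le_exp_mul_mgf ε ht h_int)

theorem superexpDecay_measure_lt {Ω : Type*} [MeasurableSpace Ω] {g : ℕ → ℝ}
    (hg : ∀ n, 0 < g n) {μ : ℕ → Measure Ω} [∀ n, IsFiniteMeasure (μ n)] {X : Ω → ℝ}
    (hint : ∀ n t, Integrable (fun ω => Real.exp (t * X ω)) (μ n))
    (hΛ : ∀ s : ℝ, Tendsto (fun n => (g n)⁻¹ * Real.log (mgf (fun ω => s * X ω) (μ n) (g n)))
      atTop (𝓝 0))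
    {r : ℝ} (hr : 0 < r) : SuperexpDecay g (fun n => μ n {ω | r < X ω}) := by
  intro R hR
  set s := (R + 1) / r
  refine ⟨1, ?_⟩
  filter_upwards [(hΛ s).eventually_le_const one_pos] with n hΛn
  set M := mgf (fun ω => s * X ω) (μ n) (g n)
  have hsub : {ω | r < X ω} ⊆ {ω | R + 1 ≤ s * X ω} := fun ω hω => by
    have : s * r = R + 1 := div_mul_cancel₀ _ hr.ne'
    simp only [Set.mem_ofPred_eq] at hω ⊢
    nlinarith [show 0 < s by positivity]
  calc μ n {ω | r < X ω} ≤ μ n {ω | R + 1 ≤ s * X ω} := measure_mono hsub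
    _ ≤ ENNReal.ofReal (Real.exp (-g n * (R + 1)) * M) :=
        measure_ge_le_ofReal_exp_mul_mgf _ (hg n).le (by simpa [mul_assoc] using hint n (g n * s))
    _ ≤ 1 * ENNReal.ofReal (Real.exp (-g n * R)) := by
        rw [one_mul]
        gcongr
        calc Real.exp (-g n * (R + 1)) * M ≤ Real.exp (-g n * (R + 1)) * Real.exp (Real.log M) := by
              gcongr
              exact Real.le_exp_log M
          _ = Real.exp (-g n * R + g n * ((g n)⁻¹ * Real.log M - 1)) := by
              rw [← Real.exp_add, mul_sub, mul_inv_cancel_left₀ (hg n).ne']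
              ring_nf
          _ ≤ Real.exp (-g n * R) := by
              gcongr
              nlinarith [hg n]

theorem IsCompact.exists_finset_subset_iUnion_lt_dual {E : Type*} [NormedAddCommGroup E]
    [NormedSpace ℝ E] {K : Set E} (hK : IsCompact K) {r : ℝ} (hr : ∀ y ∈ K, r < ‖y‖) :
    ∃ t : Finset (StrongDual ℝ E), K ⊆ ⋃ θ ∈ t, {x | r < θ x} := by
  refine hK.elim_finite_subcover (fun θ : StrongDual ℝ E => {x | r < θ x})
    (fun θ => isOpen_lt continuous_const θ.continuous) fun y hy => ?_
  obtain ⟨θ, -, hθ⟩ := exists_dual_vector'' ℝ y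
  exact Set.mem_iUnion.2 ⟨θ, by simpa [hθ] using hr y hy⟩

theorem stmt_19_general {E : Type*} [NormedAddCommGroup E] [NormedSpace ℝ E]
    [MeasurableSpace E] [BorelSpace E]
    (g : ℕ → ℝ) (hgpos : ∀ n, 0 < g n) (hg : Tendsto g atTop atTop)
    (ν : ℕ → Measure E) (hνprob : ∀ n, IsProbabilityMeasure (ν n))
    (hνgauss : ∀ n, ∀ θ : E →L[ℝ] ℝ, ∃ v : NNReal, (ν n).map θ = gaussianReal 0 v)
    (μ : ℕ → Measure E)
    (hμ : ∀ n, μ n = (ν n).map (fun x => (Real.sqrt (g n))⁻¹ • x))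
    (het : ∀ R : ℝ, 0 < R → ∃ K : Set E, IsCompact K ∧
      ∀ n, μ n Kᶜ ≤ ENNReal.ofReal (Real.exp (-(g n) * R)))
    (hΛ : ∀ θ : E →L[ℝ] ℝ,
      Tendsto (fun n => (g n)⁻¹ * Real.log (∫ x, Real.exp (g n * θ x) ∂(μ n)))
        atTop (𝓝 0)) :
    ∀ δ : ℝ, 0 < δ →
      limsup (fun n => (((g n)⁻¹ : ℝ) : EReal) * ENNReal.log (μ n {x | δ ≤ ‖x‖}))
        atTop = ⊥ := by
  have hμprob : ∀ n, IsProbabilityMeasure (μ n) := fun n => by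
    rw [hμ n]
    exact Measure.isProbabilityMeasure_map (by fun_prop)
  have hint : ∀ n (θ : E →L[ℝ] ℝ) t, Integrable (fun x => Real.exp (t * θ x)) (μ n) := by
    intro n θ t
    obtain ⟨v, hv⟩ := hνgauss n θ
    rw [hμ n, integrable_map_measure (by fun_prop) (by fun_prop)]
    simpa [Function.comp_def, mul_assoc] using
      integrable_exp_mul_of_map_eq_gaussianReal hv (t * (Real.sqrt (g n))⁻¹)
  intro δ hδ
  refine SuperexpDecay.limsup_log_eq_bot hgpos hg fun R hR => ?_
  obtain ⟨K, hK, hKc⟩ := het R hR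
  have hKS : IsCompact (K ∩ {x | δ ≤ ‖x‖}) :=
    hK.inter_right (isClosed_le continuous_const continuous_norm)
  obtain ⟨t, ht⟩ := hKS.exists_finset_subset_iUnion_lt_dual fun y hy =>
    (half_lt_self hδ).trans_le hy.2
  have hdecay : ∀ θ ∈ t, SuperexpDecay g (fun n => μ n {x | δ / 2 < θ x}) := fun θ _ =>
    superexpDecay_measure_lt hgpos (hint · θ) (fun s => by simpa [mgf] using hΛ (s • θ))
      (by positivity)
  obtain ⟨C, hC⟩ := SuperexpDecay.finset_sum hdecay R hR
  refine ⟨1 + C, ?_⟩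
  filter_upwards [hC] with n hn
  calc μ n {x | δ ≤ ‖x‖} ≤ μ n Kᶜ + μ n (K ∩ {x | δ ≤ ‖x‖}) := by
        refine (measure_mono fun x hx => ?_).trans (measure_union_le _ _)
        by_cases hxK : x ∈ K
        exacts [Or.inr ⟨hxK, hx⟩, Or.inl hxK]
    _ ≤ μ n Kᶜ + ∑ θ ∈ t, μ n {x | δ / 2 < θ x} := by
        gcongr
        exact (measure_mono ht).trans (measure_biUnion_finset_le t _)
    _ ≤ ENNReal.ofReal (Real.exp (-g n * R)) + C * ENNReal.ofReal (Real.exp (-g n * R)) :=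
        add_le_add (hKc n) hn
    _ = (1 + C : ℝ≥0) * ENNReal.ofReal (Real.exp (-g n * R)) := by
        push_cast
        ring

/-- Gärtner–Ellis type estimate: if `μ_n`, the laws of `g_n^{-1/2}` times centered
Gaussian variables whose laws converge weakly, form an exponentially tight sequence at
speed `g` and the limiting log-Laplace functional `Λ` vanishes identically, then
`(1/g_n) log μ_n{‖x‖ ≥ δ} → −∞` for every `δ > 0`. -/
theorem stmt_19 {E : Type*} [NormedAddCommGroup E] [NormedSpace ℝ E]
    [CompleteSpace E] [SecondCountableTopology E]
    [MeasurableSpace E] [BorelSpace E]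
    (g : ℕ → ℝ) (hgpos : ∀ n, 0 < g n) (hg : Tendsto g atTop atTop)
    (ν : ℕ → Measure E) (hνprob : ∀ n, IsProbabilityMeasure (ν n))
    (hνgauss : ∀ n, ∀ θ : E →L[ℝ] ℝ, ∃ v : NNReal, (ν n).map θ = gaussianReal 0 v)
    (νlim : Measure E) (hνlim : IsProbabilityMeasure νlim)
    (hνconv : ∀ f : BoundedContinuousFunction E ℝ,
      Tendsto (fun n => ∫ x, f x ∂(ν n)) atTop (𝓝 (∫ x, f x ∂νlim)))
    (μ : ℕ → Measure E)
    (hμ : ∀ n, μ n = (ν n).map (fun x => (Real.sqrt (g n))⁻¹ • x))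
    (het : ∀ R : ℝ, 0 < R → ∃ K : Set E, IsCompact K ∧
      ∀ n, μ n Kᶜ ≤ ENNReal.ofReal (Real.exp (-(g n) * R)))
    (hΛ : ∀ θ : E →L[ℝ] ℝ,
      Tendsto (fun n => (g n)⁻¹ * Real.log (∫ x, Real.exp (g n * θ x) ∂(μ n)))
        atTop (𝓝 0)) :
    ∀ δ : ℝ, 0 < δ →
      limsup (fun n => (((g n)⁻¹ : ℝ) : EReal) * ENNReal.log (μ n {x | δ ≤ ‖x‖}))
        atTop = ⊥ :=
  stmt_19_general g hgpos hg ν hνprob hνgauss μ hμ het hΛ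
end
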